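/- Let M have the cone covering property with constant N: for every bounded open set E ⊂ M and every x ∈ E there exist x_1,…,x_N ∈ M∖E with Γ(x) ∖ T(E*) ⊂ ⋃_{m=1}^N Γ(x_m), where E* = E^σ is the σ-extension of E. Let u be an X-valued tent-space element, λ > 0, and E = {x : 𝒜u(x) > λ} be bounded and open. Then for all x ∈ M, 𝒜(u 1_{(M⁺)∖T(E*)})(x) ≤ N λ. -/
import Mathlib


open Metric

/-- the cone of unit aperture at `x` in the upper half-space `M × (0,∞)` -/
def cone {M : Type*} [MetricSpace M] (x : M) : Set (M × ℝ) :=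
  {p | dist x p.1 < p.2}

/-- the tent over a set `E ⊆ M` -/
def tent {M : Type*} [MetricSpace M] (E : Set M) : Set (M × ℝ) :=
  {p | 0 < p.2 ∧ ball p.1 p.2 ⊆ E}

private lemma G_iUnion_le {α ι : Type*} (G : Set α → ℝ)
    (hmono : ∀ S S', S ⊆ S' → G S ≤ G S')
    (hsub : ∀ S S', G (S ∪ S') ≤ G S + G S')
    (f : ι → Set α) :
    ∀ s : Finset ι, s.Nonempty → G (⋃ i ∈ s, f i) ≤ ∑ i ∈ s, G (f i) := by
  classical
  intro s hs
  induction hs using Finset.Nonempty.cons_induction with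
  | singleton a => simp
  | cons a s ha hs ih =>
    rw [Finset.cons_eq_insert, Finset.set_biUnion_insert, Finset.sum_insert ha]
    exact le_trans (hsub _ _) (by linarith)

/-- suppose `M` has the cone covering property with constant `N` for the
bounded open level set `E = {x : 𝒜u(x) > λ}` and its extension `E*`. Here
`G S = ‖u 1_S‖_{γ(L²(M⁺),X)}` is the localized square function of the tent-space element
`u` (so `𝒜u(x) = G(Γ(x))` and `𝒜(u 1_{M⁺∖T(E*)})(x) = G(Γ(x) ∖ T(E*))`), which is
non-negative, monotone and subadditive. Then `𝒜(u 1_{M⁺∖T(E*)})(x) ≤ N λ` for all `x`. -/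
theorem pointwise_bound_outside_tent
    {M : Type*} [MetricSpace M]
    (G : Set (M × ℝ) → ℝ)
    (hnonneg : ∀ S, 0 ≤ G S)
    (hmono : ∀ S S', S ⊆ S' → G S ≤ G S')
    (hsub : ∀ S S', G (S ∪ S') ≤ G S + G S')
    (lam : ℝ) (hlam : 0 ≤ lam)
    (E : Set M) (hE : E = {x | lam < G (cone x)})
    (hEb : Bornology.IsBounded E) (hEo : IsOpen E)
    (N : ℕ) (hN : 1 ≤ N)
    (Estar : Set M) (hEstar : E ⊆ Estar)
    (hcover : ∀ x ∈ E, ∃ xs : Fin N → M, (∀ m, xs m ∉ E) ∧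
      cone x \ tent Estar ⊆ ⋃ m, cone (xs m)) :
    ∀ x : M, G (cone x \ tent Estar) ≤ N * lam := by
  intro x
  by_cases hx : x ∈ E
  · obtain ⟨xs, hxs, hcov⟩ := hcover x hx
    have h1 : G (cone x \ tent Estar) ≤ G (⋃ m, cone (xs m)) :=
      hmono _ _ hcov
    have h2 : G (⋃ m, cone (xs m)) ≤ ∑ m : Fin N, G (cone (xs m)) := by
      have := G_iUnion_le G hmono hsub (fun m => cone (xs m)) Finset.univ
        (Finset.univ_nonempty_iff.mpr ⟨⟨0, hN⟩⟩)
      simpa using this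
    have h3 : ∑ m : Fin N, G (cone (xs m)) ≤ N * lam := by
      calc ∑ m : Fin N, G (cone (xs m)) ≤ ∑ _m : Fin N, lam := by
            apply Finset.sum_le_sum
            intro m _
            have := hxs m
            rw [hE] at this
            simpa using not_lt.mp this
        _ = N * lam := by simp [mul_comm]
    linarith
  · have h1 : G (cone x \ tent Estar) ≤ G (cone x) := hmono _ _ Set.diff_subset
    have h2 : G (cone x) ≤ lam := by
      rw [hE] at hx
      simpa using not_lt.mp hx
    have : lam ≤ N * lam := by
      nlinarith [(Nat.one_le_cast (α := ℝ)).mpr hN]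
    linarith
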